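/- arXiv:1605.00802 — 4 statements merged into one kernel-verified Lean document; each statement's English description precedes it below -/
import Mathlib

section
/- Let r(γ,ρ) = (γ + ρ(1−γ)) / √(γ² + (1−γ)² + 2ργ(1−γ)). For every fixed ρ ∈ (−1,1), the map γ ↦ r(γ,ρ) is strictly increasing on [0,1], with r(0,ρ) = ρ and r(1,ρ) = 1. -/
open Set

/-- The correlation `r(γ,ρ)` between the principal's interest and the
agent's prioritization variable. -/
noncomputable def r (γ ρ : ℝ) : ℝ :=
  (γ + ρ * (1 - γ)) / Real.sqrt (γ ^ 2 + (1 - γ) ^ 2 + 2 * ρ * γ * (1 - γ))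

set_option maxHeartbeats 1000000 in
/-- For fixed alignment `ρ ∈ (-1,1)`, the correlation `r(γ,ρ)` is strictly
increasing in the extrinsic-motivation weight `γ` on `[0,1]`, from `ρ` to `1`. -/
theorem stmt3 (ρ : ℝ) (hρ : ρ ∈ Ioo (-1 : ℝ) 1) :
    StrictMonoOn (fun γ => r γ ρ) (Icc (0 : ℝ) 1) ∧ r 0 ρ = ρ ∧ r 1 ρ = 1 := by
  obtain ⟨h1, h2⟩ := hρ
  have hc : (0:ℝ) < 1 - ρ ^ 2 := by nlinarith
  refine ⟨?_, ?_, ?_⟩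
  · intro a ha b hb hab
    obtain ⟨ha0, ha1⟩ := ha
    obtain ⟨hb0, hb1⟩ := hb
    have hma : 0 < 1 - a := by linarith [lt_of_lt_of_le hab hb1]
    have hmb : (0:ℝ) ≤ 1 - b := by linarith
    have hba : 0 < b - a := by linarith
    simp only [r]
    obtain ⟨Na, hNadef⟩ : ∃ x, x = a + ρ * (1 - a) := ⟨_, rfl⟩
    obtain ⟨Nb, hNbdef⟩ : ∃ x, x = b + ρ * (1 - b) := ⟨_, rfl⟩
    obtain ⟨Qa, hQadef⟩ : ∃ x, x = a ^ 2 + (1 - a) ^ 2 + 2 * ρ * a * (1 - a) := ⟨_, rfl⟩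
    obtain ⟨Qb, hQbdef⟩ : ∃ x, x = b ^ 2 + (1 - b) ^ 2 + 2 * ρ * b * (1 - b) := ⟨_, rfl⟩
    rw [← hNadef, ← hNbdef, ← hQadef, ← hQbdef]
    have hQaid : Qa = Na ^ 2 + (1 - ρ ^ 2) * (1 - a) ^ 2 := by
      rw [hQadef, hNadef]; ring
    have hQbid : Qb = Nb ^ 2 + (1 - ρ ^ 2) * (1 - b) ^ 2 := by
      rw [hQbdef, hNbdef]; ring
    have hkey : Nb ^ 2 * Qa - Na ^ 2 * Qb
        = (1 - ρ ^ 2) * (b - a) * (Nb * (1 - a) + Na * (1 - b)) := by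
      rw [hQaid, hQbid]
      have h : Nb * (1 - a) - Na * (1 - b) = b - a := by rw [hNadef, hNbdef]; ring
      linear_combination ((1 - ρ ^ 2) * (Nb * (1 - a) + Na * (1 - b))) * h
    have hQa : 0 < Qa := by
      rw [hQaid]
      nlinarith [sq_nonneg Na, mul_pos hc (pow_pos hma 2)]
    have hQb : 0 < Qb := by
      rw [hQbdef]
      nlinarith [mul_nonneg (by linarith : (0:ℝ) ≤ 1 - ρ) (sq_nonneg (2 * b - 1))]
    have hsa : 0 < Real.sqrt Qa := Real.sqrt_pos.mpr hQa
    have hsb : 0 < Real.sqrt Qb := Real.sqrt_pos.mpr hQb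
    have hsa2 : Real.sqrt Qa ^ 2 = Qa := Real.sq_sqrt hQa.le
    have hsb2 : Real.sqrt Qb ^ 2 = Qb := Real.sq_sqrt hQb.le
    rw [div_lt_div_iff₀ hsa hsb]
    have hNab : Na < Nb := by
      rw [hNadef, hNbdef]; nlinarith [mul_pos hba (by linarith : (0:ℝ) < 1 - ρ)]
    rcases le_or_gt 0 Na with hNa | hNa
    · have hNb : 0 < Nb := lt_of_le_of_lt hNa hNab
      have hk : Na ^ 2 * Qb < Nb ^ 2 * Qa := by
        nlinarith [hkey, mul_pos (mul_pos hc hba) (mul_pos hNb hma),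
          mul_nonneg (mul_nonneg hc.le hba.le) (mul_nonneg hNa hmb)]
      have h5 : (Na * Real.sqrt Qb) ^ 2 < (Nb * Real.sqrt Qa) ^ 2 := by
        rw [mul_pow, mul_pow, hsa2, hsb2]; exact hk
      exact lt_of_pow_lt_pow_left₀ 2 (mul_pos hNb hsa).le h5
    · rcases le_or_gt 0 Nb with hNb | hNb
      · have h3 : Na * Real.sqrt Qb < 0 := mul_neg_of_neg_of_pos hNa hsb
        have h4 : 0 ≤ Nb * Real.sqrt Qa := mul_nonneg hNb hsa.le
        linarith
      · have hmb' : 0 < 1 - b := by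
          rw [hNbdef] at hNb
          nlinarith [mul_nonneg (by linarith : (0:ℝ) ≤ 1 + ρ) hmb]
        have hk : Nb ^ 2 * Qa < Na ^ 2 * Qb := by
          nlinarith [hkey, mul_pos (mul_pos hc hba) (mul_pos (neg_pos.mpr hNb) hma),
            mul_pos (mul_pos hc hba) (mul_pos (neg_pos.mpr hNa) hmb')]
        have h5 : (-(Nb * Real.sqrt Qa)) ^ 2 < (-(Na * Real.sqrt Qb)) ^ 2 := by
          rw [neg_sq, neg_sq, mul_pow, mul_pow, hsa2, hsb2]; exact hk
        have h6 := lt_of_pow_lt_pow_left₀ 2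
          (by nlinarith [mul_pos (neg_pos.mpr hNa) hsb] : (0:ℝ) ≤ -(Na * Real.sqrt Qb)) h5
        linarith
  · show (0 + ρ * (1 - 0)) / Real.sqrt (0 ^ 2 + (1 - 0) ^ 2 + 2 * ρ * 0 * (1 - 0)) = ρ
    norm_num
  · show (1 + ρ * (1 - 1)) / Real.sqrt (1 ^ 2 + (1 - 1) ^ 2 + 2 * ρ * 1 * (1 - 1)) = 1
    norm_num
end

section
/- Let r(γ,ρ) = (γ + ρ(1−γ)) / √(γ² + (1−γ)² + 2ργ(1−γ)). For every fixed γ ∈ (0,1/2), the map ρ ↦ r(γ,ρ) is strictly increasing on (−1,1). -/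
/-!
With `a = γ`, `b = 1 - γ` and `D = a² + b² + 2ρab > 0`, the quotient rule gives
`∂ρ r = b² (b + ρa) / D^{3/2}`, and `b + ρa = (b - a) + (1 + ρ) a > 0` because `a ≤ b` and `ρ > -1`.
-/

open Set

/-- The correlation of `X` with `a X + b Y`, for standard Gaussians `X, Y` of correlation `ρ`. -/
noncomputable def mixCorr (a b ρ : ℝ) : ℝ :=
  (a + ρ * b) / Real.sqrt (a ^ 2 + b ^ 2 + 2 * ρ * a * b)

lemma mixVariance_pos {a b ρ : ℝ} (ha : 0 < a) (hab : a ≤ b) (hρ : -1 < ρ) :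
    0 < a ^ 2 + b ^ 2 + 2 * ρ * a * b := by
  nlinarith [sq_nonneg (b - a), mul_pos ha (ha.trans_le hab)]

lemma hasDerivAt_mixCorr (a b ρ : ℝ) (hD : 0 < a ^ 2 + b ^ 2 + 2 * ρ * a * b) :
    HasDerivAt (mixCorr a b)
      (b ^ 2 * (b + ρ * a) / Real.sqrt (a ^ 2 + b ^ 2 + 2 * ρ * a * b) ^ 3) ρ := by
  have hnum : HasDerivAt (fun ρ => a + ρ * b) b ρ := by
    simpa using ((hasDerivAt_id ρ).mul_const b).const_add a
  have hvar : HasDerivAt (fun ρ => a ^ 2 + b ^ 2 + 2 * ρ * a * b) (2 * a * b) ρ := by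
    simpa [mul_assoc] using
      (((hasDerivAt_id ρ).const_mul 2).mul_const (a * b)).const_add (a ^ 2 + b ^ 2)
  have hs := Real.sqrt_pos.2 hD
  refine (hnum.fun_div (hvar.sqrt hD.ne') hs.ne').congr_deriv ?_
  have hsq := Real.sq_sqrt hD.le
  generalize Real.sqrt (a ^ 2 + b ^ 2 + 2 * ρ * a * b) = s at hs hsq ⊢
  field_simp
  rw [hsq]
  ring

theorem strictMonoOn_mixCorr {a b : ℝ} (ha : 0 < a) (hab : a ≤ b) :
    StrictMonoOn (mixCorr a b) (Ioi (-1)) := by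
  have hderiv (ρ : ℝ) (hρ : ρ ∈ Ioi (-1)) :=
    hasDerivAt_mixCorr a b ρ (mixVariance_pos ha hab hρ)
  refine strictMonoOn_of_deriv_pos (convex_Ioi _)
    (fun ρ hρ => (hderiv ρ hρ).continuousAt.continuousWithinAt) fun ρ hρ => ?_
  rw [interior_Ioi] at hρ
  rw [(hderiv ρ hρ).deriv]
  have hb : 0 < b := ha.trans_le hab
  have hslope : 0 < b + ρ * a := by nlinarith [mul_pos ha (neg_lt_iff_pos_add.mp hρ)]
  have hs := Real.sqrt_pos.2 (mixVariance_pos ha hab hρ)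
  positivity

/-- For fixed weight `γ ∈ (0,1/2)`, the correlation `r(γ,ρ)` is strictly
increasing in the alignment `ρ` on `(-1,1)`. -/
theorem stmt4 (γ : ℝ) (hγ : γ ∈ Ioo (0 : ℝ) (1 / 2)) :
    StrictMonoOn (fun ρ => r γ ρ) (Ioo (-1 : ℝ) 1) :=
  (strictMonoOn_mixCorr hγ.1 (by linarith [hγ.2])).mono Ioo_subset_Ioi_self
end

section
/- Let r(γ,ρ) = (γ + ρ(1−γ)) / √(γ² + (1−γ)² + 2ργ(1−γ)). For every fixed γ ∈ (1/2,1): r(γ,−1) = 1 and r(γ,1) = 1, while r(γ,ρ) < 1 for every ρ ∈ (−1,1). Consequently, ρ ↦ r(γ,ρ) is not monotone on [−1,1] and attains its minimum at an interior point of (−1,1). -/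
open Set

/-- Discipline can override misalignment: for `γ ∈ (1/2,1)`, `r(γ,·)` equals `1`
at both endpoints `ρ = ±1`, is strictly below `1` on `(-1,1)`, hence is not
monotone on `[-1,1]` and attains its minimum at an interior point. -/
theorem stmt5 (γ : ℝ) (hγ : γ ∈ Ioo (1 / 2 : ℝ) 1) :
    r γ (-1) = 1 ∧ r γ 1 = 1 ∧
    (∀ ρ ∈ Ioo (-1 : ℝ) 1, r γ ρ < 1) ∧
    ¬ MonotoneOn (fun ρ => r γ ρ) (Icc (-1 : ℝ) 1) ∧
    ¬ AntitoneOn (fun ρ => r γ ρ) (Icc (-1 : ℝ) 1) ∧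
    ∃ ρ₀ ∈ Ioo (-1 : ℝ) 1, ∀ ρ ∈ Icc (-1 : ℝ) 1, r γ ρ₀ ≤ r γ ρ := by
  obtain ⟨h1, h2⟩ := hγ
  have hγ1 : 0 < 1 - γ := by linarith
  have hγ0 : 0 < 2 * γ - 1 := by linarith
  have hDpos : ∀ ρ ∈ Icc (-1 : ℝ) 1,
      0 < γ ^ 2 + (1 - γ) ^ 2 + 2 * ρ * γ * (1 - γ) := by
    intro ρ hρ
    nlinarith [mul_pos hγ0 hγ0,
      mul_nonneg (mul_nonneg (by linarith [hρ.1] : (0:ℝ) ≤ ρ + 1)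
        (by linarith : (0:ℝ) ≤ γ)) hγ1.le]
  have hneg : r γ (-1) = 1 := by
    have e1 : γ ^ 2 + (1 - γ) ^ 2 + 2 * (-1) * γ * (1 - γ) = (2 * γ - 1) ^ 2 := by
      ring
    unfold r
    rw [e1, Real.sqrt_sq hγ0.le,
      show γ + (-1) * (1 - γ) = 2 * γ - 1 from by ring, div_self hγ0.ne']
  have hpos1 : r γ 1 = 1 := by
    have e1 : γ ^ 2 + (1 - γ) ^ 2 + 2 * 1 * γ * (1 - γ) = 1 := by ring
    unfold r
    rw [e1, Real.sqrt_one, show γ + 1 * (1 - γ) = 1 from by ring, div_one]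
  have hlt : ∀ ρ ∈ Ioo (-1 : ℝ) 1, r γ ρ < 1 := by
    intro ρ hρ
    have hD : 0 < γ ^ 2 + (1 - γ) ^ 2 + 2 * ρ * γ * (1 - γ) :=
      hDpos ρ ⟨hρ.1.le, hρ.2.le⟩
    have hN : 0 < γ + ρ * (1 - γ) := by nlinarith [hρ.1]
    have hsq : (γ + ρ * (1 - γ)) ^ 2 < γ ^ 2 + (1 - γ) ^ 2 + 2 * ρ * γ * (1 - γ) := by
      nlinarith [mul_pos hγ1 hγ1, hρ.1, hρ.2,
        mul_pos (mul_pos (by linarith [hρ.1] : (0:ℝ) < ρ + 1)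
          (by linarith [hρ.2] : (0:ℝ) < 1 - ρ)) (mul_pos hγ1 hγ1)]
    have hs : γ + ρ * (1 - γ) < Real.sqrt (γ ^ 2 + (1 - γ) ^ 2 + 2 * ρ * γ * (1 - γ)) :=
      (Real.lt_sqrt hN.le).mpr hsq
    unfold r
    exact (div_lt_one (Real.sqrt_pos.mpr hD)).mpr hs
  have h0 : r γ 0 < 1 := hlt 0 (by norm_num)
  have hmem0 : (0 : ℝ) ∈ Icc (-1 : ℝ) 1 := by norm_num
  have hmemn : (-1 : ℝ) ∈ Icc (-1 : ℝ) 1 := by norm_num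
  have hmemp : (1 : ℝ) ∈ Icc (-1 : ℝ) 1 := by norm_num
  have hnotmono : ¬ MonotoneOn (fun ρ => r γ ρ) (Icc (-1 : ℝ) 1) := by
    intro h
    have := h hmemn hmem0 (by norm_num)
    simp only at this
    rw [hneg] at this
    linarith
  have hnotanti : ¬ AntitoneOn (fun ρ => r γ ρ) (Icc (-1 : ℝ) 1) := by
    intro h
    have := h hmem0 hmemp (by norm_num)
    simp only at this
    rw [hpos1] at this
    linarith
  have hcont : ContinuousOn (fun ρ => r γ ρ) (Icc (-1 : ℝ) 1) := by
    apply ContinuousOn.div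
    · fun_prop
    · fun_prop
    · intro ρ hρ
      exact (Real.sqrt_pos.mpr (hDpos ρ hρ)).ne'
  obtain ⟨ρ₀, hρ₀, hmin⟩ := isCompact_Icc.exists_isMinOn
    (nonempty_Icc.mpr (by norm_num)) hcont
  have hmin' : ∀ ρ ∈ Icc (-1 : ℝ) 1, r γ ρ₀ ≤ r γ ρ := fun ρ hρ => hmin hρ
  have hρ₀lt : r γ ρ₀ < 1 := lt_of_le_of_lt (hmin' 0 hmem0) h0
  refine ⟨hneg, hpos1, hlt, hnotmono, hnotanti, ρ₀, ⟨?_, ?_⟩, hmin'⟩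
  · rcases lt_or_eq_of_le hρ₀.1 with h | h
    · exact h
    · exfalso; rw [← h, hneg] at hρ₀lt; linarith
  · rcases lt_or_eq_of_le hρ₀.2 with h | h
    · exact h
    · exfalso; rw [h, hpos1] at hρ₀lt; linarith
end

section
/- For every λ ∈ (0, 1/2): (2λ(20λ − 87) + 3(9λ − 29)·ln(1−2λ)) / (160λ²) > (2λ² − 6λ − 3·ln(1−2λ)) / (8λ²). -/
/-!
With `L = -log (1 - 2λ)`, the difference of the two costs is `27 ((1 - λ) L - 2λ) / (160 λ²)`,
so the claim is `L > 2λ / (1 - λ)`: the classical bound `log (1 + y) > 2y / (y + 2)`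
at `y = 2λ / (1 - 2λ)`.
-/

theorem Real.two_mul_div_two_sub_lt_neg_log_one_sub {x : ℝ} (h0 : 0 < x) (h1 : x < 1) :
    2 * x / (2 - x) < -Real.log (1 - x) := by
  have hpos : 0 < 1 - x := sub_pos.2 h1
  have key := Real.lt_log_one_add_of_pos (div_pos h0 hpos)
  have hlog : Real.log (1 + x / (1 - x)) = -Real.log (1 - x) := by
    rw [← Real.log_inv]
    congr 1
    field_simp
    ring
  have hlhs : 2 * (x / (1 - x)) / (x / (1 - x) + 2) = 2 * x / (2 - x) := by
    have : 2 - x ≠ 0 := by linarith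
    field_simp
    ring
  rwa [hlog, hlhs] at key

/-- A variable-rate (human-like) agent always incurs strictly larger cost than a
constant-rate (machine-like) agent with the same average rate. -/
theorem stmt12 (lam : ℝ) (h : lam ∈ Set.Ioo (0 : ℝ) (1 / 2)) :
    (2 * lam ^ 2 - 6 * lam - 3 * Real.log (1 - 2 * lam)) / (8 * lam ^ 2) <
      (2 * lam * (20 * lam - 87) + 3 * (9 * lam - 29) * Real.log (1 - 2 * lam)) /
        (160 * lam ^ 2) := by
  obtain ⟨h0, h1⟩ := h
  set L := -Real.log (1 - 2 * lam) with hL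
  have hdiff : (2 * lam * (20 * lam - 87) + 3 * (9 * lam - 29) * Real.log (1 - 2 * lam)) /
        (160 * lam ^ 2) - (2 * lam ^ 2 - 6 * lam - 3 * Real.log (1 - 2 * lam)) / (8 * lam ^ 2)
      = 27 * ((1 - lam) * L - 2 * lam) / (160 * lam ^ 2) := by
    rw [hL]
    field_simp
    ring
  have hbound : 2 * lam < (1 - lam) * L := by
    have := Real.two_mul_div_two_sub_lt_neg_log_one_sub (x := 2 * lam) (by linarith) (by linarith)
    rw [div_lt_iff₀ (by linarith)] at this
    linarith
  refine sub_pos.1 (hdiff ▸ div_pos ?_ (by positivity))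
  linarith
end
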